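/- arXiv:1407.1910 — 5 statements merged into one kernel-verified Lean document; each statement's English description precedes it below -/
import Mathlib

section
/- Let G=(V,E,w) have distinct edge weights, let T=mst(G), and let e∈T. Let C^{-1}(e) be the set of non-tree edges f such that e lies on the tree path between the endpoints of f. Then T remains the minimum spanning tree of the graph obtained by changing w(e) to any value w'(e) with w'(e) < min_{f∈C^{-1}(e)} w(f) (where min∅=∞), and T fails to be the MST if w'(e) > min_{f∈C^{-1}(e)} w(f) for some such f. -/
open SimpleGraph

def IsSpanningTree {V : Type*} (G : SimpleGraph V) (T : Finset (Sym2 V)) : Prop :=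
  ↑T ⊆ G.edgeSet ∧ (SimpleGraph.fromEdgeSet (↑T : Set (Sym2 V))).IsTree

def IsMST {V : Type*} (G : SimpleGraph V) (w : Sym2 V → ℝ) (T : Finset (Sym2 V)) : Prop :=
  IsSpanningTree G T ∧ ∀ T' : Finset (Sym2 V), IsSpanningTree G T' →
    ∑ e ∈ T, w e ≤ ∑ e ∈ T', w e

/-- `e` lies on the (unique) path in the tree `fromEdgeSet ↑T` between the two
endpoints of the edge `f`. -/
def OnTreePath {V : Type*} (T : Finset (Sym2 V)) (e f : Sym2 V) : Prop :=
  ∃ (a b : V) (p : (SimpleGraph.fromEdgeSet (↑T : Set (Sym2 V))).Walk a b),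
    p.IsPath ∧ f = s(a, b) ∧ e ∈ p.edges

/-!
Both halves rest on the exchange property of spanning trees: if the non-tree edge `f` closes a
cycle through the tree edge `e`, then `T - e + f` is again a spanning tree. Comparing `T` with
`T - e + f` shows that an MST satisfies the cycle property `w e ≤ w f`, which the new weight
`w' e > w f` violates. Conversely a spanning tree satisfying the strict cycle property is an MST:
an MST `T₀ ≠ T` contains an edge `f ∉ T`, and the `T`-path of `f` leaves the two components of
`T₀ - f` through some edge `g` whose `T₀`-path passes through `f`, so `T₀ - f + g` is lighter
than `T₀`. With `w'`, the cycle property holds at `e` by assumption and elsewhere because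
`T` is the MST for `w` and the weights are distinct.
-/

open Finset

section

variable {V : Type*} {G : SimpleGraph V} {T T₀ : Finset (Sym2 V)} {e f : Sym2 V}

lemma Finset.sum_insert_erase_of_notMem {α β : Type*} [DecidableEq α] [AddCommGroup β]
    {s : Finset α} {a b : α} (w : α → β) (ha : a ∈ s) (hb : b ∉ s) :
    ∑ x ∈ insert b (s.erase a), w x = ∑ x ∈ s, w x - w a + w b := by
  rw [sum_insert fun h => hb (mem_of_mem_erase h), sum_erase_eq_sub ha, add_comm]

namespace SimpleGraph

lemma edgeSet_fromEdgeSet_of_subset_edgeSet {s : Set (Sym2 V)} (hs : s ⊆ G.edgeSet) :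
    (fromEdgeSet s).edgeSet = s := by
  rw [edgeSet_fromEdgeSet, sdiff_eq_left]
  exact Set.disjoint_left.2 fun x hx hdiag => G.not_isDiag_of_mem_edgeSet (hs hx) hdiag

lemma Connected.connected_deleteEdges_of_not_isBridge (hG : G.Connected)
    (he : ¬ G.IsBridge e) : (G.deleteEdges {e}).Connected := by
  cases e with | h x y => exact hG.connected_delete_edge_of_not_isBridge he

end SimpleGraph

lemma isSpanningTree_iff_connected_and_card [Finite V] :
    IsSpanningTree G T ↔ ↑T ⊆ G.edgeSet ∧
      (fromEdgeSet (T : Set (Sym2 V))).Connected ∧ #T + 1 = Nat.card V := by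
  refine and_congr_right fun hT => ?_
  rw [isTree_iff_connected_and_card, edgeSet_fromEdgeSet_of_subset_edgeSet hT,
    Nat.card_coe_set_eq, Set.ncard_coe_finset]

lemma OnTreePath.mem (h : OnTreePath T e f) : e ∈ T := by
  obtain ⟨a, b, p, -, -, he⟩ := h
  have := p.edges_subset_edgeSet he
  rw [edgeSet_fromEdgeSet] at this
  exact this.1

lemma IsSpanningTree.exchange [Finite V] [DecidableEq V] (hT : IsSpanningTree G T)
    (hfG : f ∈ G.edgeSet) (hfT : f ∉ T) (hef : OnTreePath T e f) :
    IsSpanningTree G (insert f (T.erase e)) := by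
  have heT := hef.mem
  have hfe : f ≠ e := fun h => hfT (h ▸ heT)
  obtain ⟨a, b, p, hp, rfl, hep⟩ := hef
  rw [isSpanningTree_iff_connected_and_card] at hT ⊢
  obtain ⟨hTG, hTconn, hTcard⟩ := hT
  set K := fromEdgeSet (insert s(a, b) (T : Set (Sym2 V)))
  have hle : fromEdgeSet (T : Set (Sym2 V)) ≤ K := fromEdgeSet_mono (Set.subset_insert _ _)
  have hba : K.Adj b a := by
    simpa [K, Sym2.eq_swap] using (G.adj_symm hfG).ne
  -- `f` closes the tree path `p` through `e` into a cycle, so `e` is no bridge of `T + f`.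
  have hcycle : (Walk.cons hba (p.mapLe hle)).IsCycle := by
    refine Path.cons_isCycle ⟨_, hp.mapLe hle⟩ hba fun h => hfT ?_
    rw [Walk.edges_mapLe_eq_edges, Sym2.eq_swap] at h
    exact OnTreePath.mem ⟨a, b, p, hp, rfl, h⟩
  have hbridge : ¬ K.IsBridge e := fun h =>
    h.notMem_edges_of_isCycle hcycle (by simp [hep])
  have hK : K.deleteEdges {e} = fromEdgeSet ↑(insert s(a, b) (T.erase e)) := by
    rw [deleteEdges, ← fromEdgeSet_sdiff, coe_insert, coe_erase,
      Set.insert_sdiff_of_notMem _ (Set.notMem_singleton_iff.2 hfe)]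
  refine ⟨?_, hK ▸ (hTconn.mono hle).connected_deleteEdges_of_not_isBridge hbridge, ?_⟩
  · rw [coe_insert, Set.insert_subset_iff, coe_erase]
    exact ⟨hfG, Set.sdiff_subset.trans hTG⟩
  · rw [card_insert_of_notMem fun h => hfT (mem_of_mem_erase h), card_erase_add_one heT,
      hTcard]

lemma IsSpanningTree.exists_onTreePath_swap (hT₀ : IsSpanningTree G T₀)
    (hT : IsSpanningTree G T) (hf₀ : f ∈ T₀) (hfT : f ∉ T) :
    ∃ g ∉ T₀, OnTreePath T g f ∧ OnTreePath T₀ f g := by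
  cases f with | h a b
  set D := (fromEdgeSet (T₀ : Set (Sym2 V))).deleteEdges {s(a, b)}
  have hab : ¬ D.Reachable a b := isBridge_iff.mp <|
    isAcyclic_iff_forall_isBridge.mp hT₀.2.isAcyclic
      (by rwa [edgeSet_fromEdgeSet_of_subset_edgeSet hT₀.1])
  obtain ⟨p, hp⟩ := hT.2.connected.exists_isPath a b
  obtain ⟨d, hd, hx, hy⟩ := p.exists_boundary_dart {v | D.Reachable a v} .rfl hab
  have hdT : OnTreePath T d.edge s(a, b) := ⟨a, b, p, hp, rfl, List.mem_map_of_mem hd⟩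
  have hgT₀ : d.edge ∉ T₀ := by
    intro h
    refine hy (hx.trans (deleteEdges_adj.2 ⟨(fromEdgeSet_adj _).2 ⟨h, d.adj.ne⟩, ?_⟩).reachable)
    exact fun hd => hfT (Set.mem_singleton_iff.1 hd ▸ hdT.mem)
  refine ⟨d.edge, hgT₀, hdT, ?_⟩
  obtain ⟨q, hq⟩ := hT₀.2.connected.exists_isPath d.fst d.snd
  refine ⟨_, _, q, hq, rfl, ?_⟩
  by_contra hfq
  exact hy (hx.trans (reachable_deleteEdges_iff_exists_walk.2 ⟨q, hfq⟩))

lemma exists_isMST [Finite V] (w : Sym2 V → ℝ) (hT : IsSpanningTree G T) :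
    ∃ T₀, IsMST G w T₀ := by
  classical
  have := Fintype.ofFinite V
  obtain ⟨T₀, hT₀, hmin⟩ := ({T' | IsSpanningTree G T'} : Finset _).exists_min_image
    (fun T' => ∑ e ∈ T', w e) ⟨T, by simpa using hT⟩
  simp only [mem_filter, mem_univ, true_and] at hT₀ hmin
  exact ⟨T₀, hT₀, hmin⟩

lemma IsMST.le_of_onTreePath [Finite V] {w : Sym2 V → ℝ} (hT : IsMST G w T)
    (hfG : f ∈ G.edgeSet) (hfT : f ∉ T) (hef : OnTreePath T e f) : w e ≤ w f := by
  classical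
  have := hT.2 _ (hT.1.exchange hfG hfT hef)
  rw [sum_insert_erase_of_notMem w hef.mem hfT] at this
  linarith

lemma IsMST.lt_of_onTreePath [Finite V] {w : Sym2 V → ℝ} (hw : Set.InjOn w G.edgeSet)
    (hT : IsMST G w T) (hfG : f ∈ G.edgeSet) (hfT : f ∉ T) (hef : OnTreePath T e f) :
    w e < w f :=
  (hT.le_of_onTreePath hfG hfT hef).lt_of_ne fun h =>
    hfT (hw (hT.1.1 hef.mem) hfG h ▸ hef.mem)

lemma IsSpanningTree.isMST_of_forall_onTreePath_lt [Finite V] {w : Sym2 V → ℝ}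
    (hT : IsSpanningTree G T)
    (hcycle : ∀ f ∈ G.edgeSet, f ∉ T → ∀ e, OnTreePath T e f → w e < w f) :
    IsMST G w T := by
  classical
  obtain ⟨T₀, hT₀⟩ := exists_isMST w hT
  have hsub : T₀ ⊆ T := by
    intro f hf₀
    by_contra hfT
    obtain ⟨g, hgT₀, hgf, hfg⟩ := hT₀.1.exists_onTreePath_swap hT hf₀ hfT
    have hlt := hcycle f (hT₀.1.1 hf₀) hfT g hgf
    have := hT₀.2 _ (hT₀.1.exchange (hT.1 hgf.mem) hgT₀ hfg)
    rw [sum_insert_erase_of_notMem w hf₀ hgT₀] at this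
    linarith
  have hcard := (isSpanningTree_iff_connected_and_card.1 hT).2.2
  have hcard₀ := (isSpanningTree_iff_connected_and_card.1 hT₀.1).2.2
  obtain rfl : T₀ = T := eq_of_subset_of_card_le hsub (by omega)
  exact hT₀

end

theorem tree_edge_sensitivity_general {V : Type*} [Fintype V]
    (G : SimpleGraph V)
    (w : Sym2 V → ℝ) (hw : Set.InjOn w G.edgeSet)
    (T : Finset (Sym2 V)) (hT : IsMST G w T)
    (e : Sym2 V) (he : e ∈ T)
    (w' : Sym2 V → ℝ)
    (hsame : ∀ f, f ≠ e → w' f = w f) :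
    ((∀ f ∈ G.edgeSet, f ∉ T → OnTreePath T e f → w' e < w f) → IsMST G w' T) ∧
    ((∃ f ∈ G.edgeSet, f ∉ T ∧ OnTreePath T e f ∧ w f < w' e) → ¬ IsMST G w' T) := by
  have hw'f : ∀ f ∉ T, w' f = w f := fun f hfT => hsame f fun h => hfT (h ▸ he)
  constructor
  · intro hlt
    refine hT.1.isMST_of_forall_onTreePath_lt fun f hfG hfT e' he'f => ?_
    rw [hw'f f hfT]
    obtain rfl | he' := eq_or_ne e' e
    · exact hlt f hfG hfT he'f
    · rw [hsame e' he']
      exact hT.lt_of_onTreePath hw hfG hfT he'f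
  · rintro ⟨f, hfG, hfT, hef, hlt⟩ hT'
    have := hT'.le_of_onTreePath hfG hfT hef
    rw [hw'f f hfT] at this
    linarith

/-- Sensitivity of a tree edge `e ∈ T`: with `C⁻¹(e)` the set of non-tree edges whose
tree path contains `e`, the tree `T` remains the MST after lowering the weight of `e`
below `min_{f ∈ C⁻¹(e)} w f` (vacuously any value if `C⁻¹(e) = ∅`, i.e. `min ∅ = ∞`),
and ceases to be the MST if the new weight exceeds `w f` for some `f ∈ C⁻¹(e)`. -/
theorem tree_edge_sensitivity {V : Type*} [Fintype V] [DecidableEq V]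
    (G : SimpleGraph V) (hG : G.Connected)
    (w : Sym2 V → ℝ) (hw : Set.InjOn w G.edgeSet)
    (T : Finset (Sym2 V)) (hT : IsMST G w T)
    (e : Sym2 V) (he : e ∈ T)
    (w' : Sym2 V → ℝ) (hw' : Set.InjOn w' G.edgeSet)
    (hsame : ∀ f, f ≠ e → w' f = w f) :
    ((∀ f ∈ G.edgeSet, f ∉ T → OnTreePath T e f → w' e < w f) → IsMST G w' T) ∧
    ((∃ f ∈ G.edgeSet, f ∉ T ∧ OnTreePath T e f ∧ w f < w' e) → ¬ IsMST G w' T) :=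
  tree_edge_sensitivity_general G w hw T hT e he w' hsame
end

section
/- Let G=(V,E,w) have distinct edge weights, let T=mst(G), let e∈T, and let (V₀,V₁) be the partition of V into the two connected components of T∖{e}. Then the minimum-weight edge of E∖T crossing the cut (V₀,V₁), if one exists, belongs to mst(G∖T), the minimum spanning forest of the graph (V, E∖T). -/
open SimpleGraph

/-- `F` is a minimum spanning forest of `H`: an acyclic subset of the edges of `H`
preserving reachability in every connected component, of minimum total weight among
all such edge sets. -/
def IsMSF {V : Type*} (H : SimpleGraph V) (w : Sym2 V → ℝ) (F : Finset (Sym2 V)) : Prop :=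
  (↑F ⊆ H.edgeSet ∧ (SimpleGraph.fromEdgeSet (↑F : Set (Sym2 V))).IsAcyclic ∧
    ∀ u v : V, H.Reachable u v → (SimpleGraph.fromEdgeSet (↑F : Set (Sym2 V))).Reachable u v) ∧
  ∀ F' : Finset (Sym2 V),
    (↑F' ⊆ H.edgeSet ∧ (SimpleGraph.fromEdgeSet (↑F' : Set (Sym2 V))).IsAcyclic ∧
      ∀ u v : V, H.Reachable u v → (SimpleGraph.fromEdgeSet (↑F' : Set (Sym2 V))).Reachable u v) →
    ∑ e ∈ F, w e ≤ ∑ e ∈ F', w e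

def CrossesCut {V : Type*} (V' : Set V) (e : Sym2 V) : Prop :=
  ∃ x y : V, e = s(x, y) ∧ x ∈ V' ∧ y ∉ V'

/-!
If the lightest edge `f = s(x, y)` of `G \ T` crossing the cut were missing from the minimum
spanning forest `F`, the path joining `x` and `y` in `F` would cross the cut along some edge `g`,
strictly heavier than `f` since `w` is injective. As `g` is a bridge of `F` separating `x` from
`y`, exchanging `g` for `f` yields a spanning forest of `G \ T` of smaller weight.
-/

namespace SimpleGraph

variable {V : Type*} {G : SimpleGraph V} {S : Set V} {u v x y : V}

theorem Walk.exists_boundary_append_cons (p : G.Walk x y) (hx : x ∈ S) (hy : y ∉ S) :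
    ∃ (u v : V) (h : G.Adj u v) (q₁ : G.Walk x u) (q₂ : G.Walk v y),
      u ∈ S ∧ v ∉ S ∧ p = q₁.append (cons h q₂) := by
  induction p with
  | nil => exact absurd hx hy
  | @cons x c y h q ih =>
    by_cases hc : c ∈ S
    · obtain ⟨u, v, huv, q₁, q₂, hu, hv, rfl⟩ := ih hc hy
      exact ⟨u, v, huv, cons h q₁, q₂, hu, hv, rfl⟩
    · exact ⟨x, c, h, nil, q, hx, hc, rfl⟩

theorem Reachable.exists_boundary_adj (h : G.Reachable x y) (hx : x ∈ S) (hy : y ∉ S) :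
    ∃ u v, G.Adj u v ∧ u ∈ S ∧ v ∉ S ∧
      (G.deleteEdges {s(u, v)}).Reachable x u ∧ (G.deleteEdges {s(u, v)}).Reachable v y := by
  classical
  obtain ⟨p⟩ := h
  obtain ⟨u, v, huv, q₁, q₂, hu, hv, hp⟩ := p.toPath.val.exists_boundary_append_cons hx hy
  have hnodup := p.toPath.property.edges_nodup
  rw [hp, Walk.edges_append, Walk.edges_cons, List.nodup_append, List.nodup_cons] at hnodup
  refine ⟨u, v, huv, hu, hv, (q₁.toDeleteEdge _ fun h ↦ ?_).reachable,
    (q₂.toDeleteEdge _ hnodup.2.1.1).reachable⟩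
  exact hnodup.2.2 _ h _ List.mem_cons_self rfl

theorem reachable_sup_edge (x y : V) : (G ⊔ edge x y).Reachable x y := by
  rcases eq_or_ne x y with rfl | hne
  · rfl
  · exact Adj.reachable (Or.inr ((edge_adj ..).mpr ⟨Or.inl ⟨rfl, rfl⟩, hne⟩))

theorem Reachable.of_sup_edge {s t : V} (h : (G ⊔ edge u v).Reachable s t)
    (huv : G.Reachable u v) : G.Reachable s t := by
  obtain ⟨p⟩ := h
  induction p with
  | nil => rfl
  | cons hadj _ ih =>
    refine Reachable.trans ?_ ih
    rcases hadj with hadj | hadj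
    · exact hadj.reachable
    · rcases (edge_adj ..).mp hadj with ⟨⟨rfl, rfl⟩ | ⟨rfl, rfl⟩, -⟩
      exacts [huv, huv.symm]

theorem Reachable.deleteEdges_sup_edge {s t : V} (h : G.Reachable s t)
    (hxu : (G.deleteEdges {s(u, v)}).Reachable x u)
    (hvy : (G.deleteEdges {s(u, v)}).Reachable v y) :
    (G.deleteEdges {s(u, v)} ⊔ edge x y).Reachable s t := by
  have hG : G ≤ G.deleteEdges {s(u, v)} ⊔ edge u v := le_sdiff_sup
  refine ((h.mono hG).mono (sup_le_sup_right le_sup_left _)).of_sup_edge ?_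
  exact (hxu.symm.mono le_sup_left).trans
    ((reachable_sup_edge x y).trans (hvy.symm.mono le_sup_left))

theorem IsAcyclic.deleteEdges_sup_edge (hG : G.IsAcyclic) (huv : G.Adj u v)
    (hxu : (G.deleteEdges {s(u, v)}).Reachable x u)
    (hvy : (G.deleteEdges {s(u, v)}).Reachable v y) :
    (G.deleteEdges {s(u, v)} ⊔ edge x y).IsAcyclic := by
  refine (hG.anti (deleteEdges_le _)).sup_edge_of_not_reachable fun hxy ↦ ?_
  exact isAcyclic_iff_forall_adj_isBridge.mp hG huv (hxu.symm.trans (hxy.trans hvy.symm))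

theorem fromEdgeSet_insert_erase [DecidableEq V] (F : Finset (Sym2 V)) :
    fromEdgeSet (↑(insert s(x, y) (F.erase s(u, v))) : Set (Sym2 V)) =
      (fromEdgeSet (↑F : Set (Sym2 V))).deleteEdges {s(u, v)} ⊔ edge x y := by
  rw [deleteEdges_fromEdgeSet, edge, ← fromEdgeSet_union, Finset.coe_insert, Finset.coe_erase,
    Set.insert_eq, Set.union_comm]

end SimpleGraph

def IsSpanningForest {V : Type*} (H : SimpleGraph V) (F : Finset (Sym2 V)) : Prop :=
  ↑F ⊆ H.edgeSet ∧ (fromEdgeSet (↑F : Set (Sym2 V))).IsAcyclic ∧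
    ∀ u v : V, H.Reachable u v → (fromEdgeSet (↑F : Set (Sym2 V))).Reachable u v

theorem IsMSF.isSpanningForest {V : Type*} {H : SimpleGraph V} {w : Sym2 V → ℝ}
    {F : Finset (Sym2 V)} (hF : IsMSF H w F) : IsSpanningForest H F :=
  hF.1

theorem IsSpanningForest.exchange {V : Type*} [DecidableEq V] {H : SimpleGraph V}
    {F : Finset (Sym2 V)} {u v x y : V} (hF : IsSpanningForest H F) (hxy : H.Adj x y)
    (huv : (fromEdgeSet (↑F : Set (Sym2 V))).Adj u v)
    (hxu : ((fromEdgeSet (↑F : Set (Sym2 V))).deleteEdges {s(u, v)}).Reachable x u)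
    (hvy : ((fromEdgeSet (↑F : Set (Sym2 V))).deleteEdges {s(u, v)}).Reachable v y) :
    IsSpanningForest H (insert s(x, y) (F.erase s(u, v))) := by
  obtain ⟨hFH, hFacyclic, hFspan⟩ := hF
  refine ⟨?_, ?_, fun s t hst ↦ ?_⟩
  · rw [Finset.coe_insert, Set.insert_subset_iff]
    exact ⟨hxy, (Finset.coe_subset.mpr (F.erase_subset _)).trans hFH⟩
  · rw [fromEdgeSet_insert_erase]
    exact hFacyclic.deleteEdges_sup_edge huv hxu hvy
  · rw [fromEdgeSet_insert_erase]
    exact (hFspan s t hst).deleteEdges_sup_edge hxu hvy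

theorem IsMSF.mem_of_crossesCut {V : Type*} {H : SimpleGraph V} {w : Sym2 V → ℝ}
    (hw : Set.InjOn w H.edgeSet) {F : Finset (Sym2 V)} (hF : IsMSF H w F) {S : Set V}
    {f : Sym2 V} (hf : f ∈ H.edgeSet) (hcross : CrossesCut S f)
    (hmin : ∀ g ∈ H.edgeSet, CrossesCut S g → w f ≤ w g) : f ∈ F := by
  classical
  by_contra hfF
  obtain ⟨x, y, rfl, hx, hy⟩ := hcross
  obtain ⟨u, v, huv, hu, hv, hxu, hvy⟩ :=
    (hF.isSpanningForest.2.2 x y (H.mem_edgeSet.mp hf).reachable).exists_boundary_adj hx hy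
  have hg : s(u, v) ∈ F := ((fromEdgeSet_adj _).mp huv).1
  have hgH : s(u, v) ∈ H.edgeSet := hF.isSpanningForest.1 hg
  have hlt : w s(x, y) < w s(u, v) :=
    (hmin _ hgH ⟨u, v, rfl, hu, hv⟩).lt_of_ne fun h ↦ hfF (hw hf hgH h ▸ hg)
  have hle := hF.2 _ (hF.isSpanningForest.exchange (H.mem_edgeSet.mp hf) huv hxu hvy)
  rw [Finset.sum_insert fun h ↦ hfF (Finset.mem_of_mem_erase h), ← Finset.add_sum_erase F w hg]
    at hle
  linarith

theorem replacement_edge_in_msf_general {V : Type*}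
    (G : SimpleGraph V)
    (w : Sym2 V → ℝ) (hw : Set.InjOn w G.edgeSet)
    (T : Finset (Sym2 V))
    (V₀ : Set V)
    (F : Finset (Sym2 V)) (hF : IsMSF (G.deleteEdges (↑T : Set (Sym2 V))) w F)
    (f : Sym2 V) (hf : f ∈ G.edgeSet) (hfT : f ∉ T) (hcross : CrossesCut V₀ f)
    (hmin : ∀ g ∈ G.edgeSet, g ∉ T → CrossesCut V₀ g → w f ≤ w g) :
    f ∈ F := by
  have hH : (G.deleteEdges ↑T).edgeSet = G.edgeSet \ ↑T := edgeSet_deleteEdges _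
  refine hF.mem_of_crossesCut (hH ▸ hw.mono Set.sdiff_subset) (hH ▸ ⟨hf, hfT⟩) hcross ?_
  rw [hH]
  exact fun g hg ↦ hmin g hg.1 hg.2

/-- Let `e = s(a,b) ∈ T = mst(G)` and let `V₀` be the vertex set of the component of
`T \ {e}` containing `a`. Then the minimum-weight non-tree edge crossing the cut
`(V₀, V \ V₀)`, if one exists, belongs to the minimum spanning forest of `G \ T`. -/
theorem replacement_edge_in_msf {V : Type*} [Fintype V] [DecidableEq V]
    (G : SimpleGraph V) (hG : G.Connected)
    (w : Sym2 V → ℝ) (hw : Set.InjOn w G.edgeSet)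
    (T : Finset (Sym2 V)) (hT : IsMST G w T)
    (a b : V) (e : Sym2 V) (heq : e = s(a, b)) (he : e ∈ T)
    (V₀ : Set V)
    (hV₀ : V₀ = {x | (SimpleGraph.fromEdgeSet (↑(T.erase e) : Set (Sym2 V))).Reachable a x})
    (F : Finset (Sym2 V)) (hF : IsMSF (G.deleteEdges (↑T : Set (Sym2 V))) w F)
    (f : Sym2 V) (hf : f ∈ G.edgeSet) (hfT : f ∉ T) (hcross : CrossesCut V₀ f)
    (hmin : ∀ g ∈ G.edgeSet, g ∉ T → CrossesCut V₀ g → w f ≤ w g) :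
    f ∈ F :=
  replacement_edge_in_msf_general G w hw T V₀ F hF f hf hfT hcross hmin
end

section
/- For all n≥1, ∑_{i=0}^{⌊log₂ n⌋} ⌊n/2^i⌋·(2^i − 1) ≤ n·⌊log₂ n⌋ − n + 1. -/
/-!
Writing `m = n / 2`, the term `i + 1` of the sum for `n` is `⌊m / 2^i⌋ · (2 · (2^i - 1) + 1)`,
so the sum for `n` is twice the sum for `m` plus `∑ ⌊m / 2^i⌋ < 2m`, while `⌊log₂ n⌋ = ⌊log₂ m⌋ + 1`.
Strong induction on `n` then closes the bound, since `2m ≤ n`.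
-/

open Finset

namespace Nat

theorem div_two_pow_succ (m i : ℕ) : m / 2 ^ (i + 1) = m / 2 / 2 ^ i := by
  rw [Nat.div_div_eq_div_mul, ← pow_succ']

theorem sum_range_div_two_pow_lt (K : ℕ) {m : ℕ} (hm : 0 < m) :
    ∑ i ∈ range K, m / 2 ^ i < 2 * m := by
  induction K generalizing m with
  | zero => simpa using hm
  | succ K ih =>
    rw [sum_range_succ']
    simp only [div_two_pow_succ, pow_zero, Nat.div_one]
    rcases (m / 2).eq_zero_or_pos with h | h
    · simp only [h, Nat.zero_div, sum_const_zero]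
      omega
    · have := ih h
      omega

theorem sum_range_succ_div_two_pow_mul (K n : ℕ) :
    ∑ i ∈ range (K + 1), n / 2 ^ i * (2 ^ i - 1) =
      2 * ∑ i ∈ range K, n / 2 / 2 ^ i * (2 ^ i - 1) + ∑ i ∈ range K, n / 2 / 2 ^ i := by
  rw [sum_range_succ', mul_sum, ← sum_add_distrib]
  simp only [pow_zero, Nat.sub_self, mul_zero, add_zero, div_two_pow_succ]
  refine sum_congr rfl fun i _ => ?_
  have hpow : 2 ^ (i + 1) - 1 = 2 * (2 ^ i - 1) + 1 := by
    have := Nat.one_le_two_pow (n := i)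
    rw [pow_succ]
    omega
  rw [hpow]
  ring

theorem sum_range_div_two_pow_mul_add_le (n : ℕ) :
    ∑ i ∈ range (log 2 n + 1), n / 2 ^ i * (2 ^ i - 1) + n ≤ n * log 2 n + 1 := by
  induction n using Nat.strong_induction_on with
  | _ n ih =>
  rcases Nat.lt_or_ge n 2 with hn | hn
  · interval_cases n <;> simp
  have hlog : log 2 n = log 2 (n / 2) + 1 := by
    have := log_div_base 2 n
    have := log_pos (b := 2) one_lt_two hn
    omega
  rw [hlog, sum_range_succ_div_two_pow_mul]
  have hm : 0 < n / 2 := by omega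
  have h2m : 2 * (n / 2) ≤ n := Nat.mul_div_le n 2
  generalize n / 2 = m at *
  have ihm := ih m (by omega)
  have hsum := sum_range_div_two_pow_lt (log 2 m + 1) hm
  have hmul : 2 * (m * log 2 m) ≤ n * log 2 m := by
    rw [← Nat.mul_assoc]
    exact Nat.mul_le_mul_right _ h2m
  rw [mul_add_one]
  omega

end Nat

theorem block_init_comparisons_general (n : ℕ) :
    ((∑ i ∈ Finset.range (Nat.log 2 n + 1), (n / 2 ^ i) * (2 ^ i - 1) : ℕ) : ℤ) ≤
      (n : ℤ) * (Nat.log 2 n : ℤ) - n + 1 := by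
  have := Nat.sum_range_div_two_pow_mul_add_le n
  omega

/-- For all `n ≥ 1`, `∑_{i=0}^{⌊log₂ n⌋} ⌊n/2^i⌋ · (2^i − 1) ≤ n·⌊log₂ n⌋ − n + 1`. -/
theorem block_init_comparisons (n : ℕ) (hn : 1 ≤ n) :
    ((∑ i ∈ Finset.range (Nat.log 2 n + 1), (n / 2 ^ i) * (2 ^ i - 1) : ℕ) : ℤ) ≤
      (n : ℤ) * (Nat.log 2 n : ℤ) - n + 1 :=
  block_init_comparisons_general n
end

section
/- Suppose a sequence of blocks has sizes that are powers of two arranged in bitonic order (strictly increasing then strictly decreasing, with at most the two largest equal). Then the number of blocks is at most 2⌊log₂ n⌋ + 2, where n is the total number of elements. -/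
/-!
Every block is at most the total `n`, so each strictly monotone half of the list consists of
distinct numbers among `2 ^ 0, …, 2 ^ ⌊log₂ n⌋` and has at most `⌊log₂ n⌋ + 1` blocks.
-/

theorem List.length_le_log_add_one_of_nodup_of_pow {b n : ℕ} (hb : 1 < b) {l : List ℕ}
    (hl : l.Nodup) (hpow : ∀ x ∈ l, ∃ k, x = b ^ k) (hle : ∀ x ∈ l, x ≤ n) :
    l.length ≤ Nat.log b n + 1 := by
  have hsub : l.toFinset ⊆ (Finset.range (Nat.log b n + 1)).image (b ^ ·) := by
    intro x hx
    rw [List.mem_toFinset] at hx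
    obtain ⟨k, rfl⟩ := hpow x hx
    exact Finset.mem_image_of_mem _
      (Finset.mem_range_succ_iff.2 (Nat.le_log_of_pow_le hb (hle _ hx)))
  calc l.length = l.toFinset.card := (List.toFinset_card_of_nodup hl).symm
    _ ≤ ((Finset.range (Nat.log b n + 1)).image (b ^ ·)).card := Finset.card_le_card hsub
    _ ≤ Nat.log b n + 1 := Finset.card_image_le.trans (Finset.card_range _).le

/-- If a list of block sizes consists of powers of two arranged in bitonic order
(strictly increasing, then strictly decreasing, where at most the two largest blocks
may be equal), and the sizes sum to `n`, then there are at most `2⌊log₂ n⌋ + 2`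
blocks. -/
theorem bitonic_block_count (n : ℕ) (l : List ℕ)
    (hpow : ∀ x ∈ l, ∃ k : ℕ, x = 2 ^ k)
    (hsum : l.sum = n)
    (hbitonic : ∃ l₁ l₂ : List ℕ, l = l₁ ++ l₂ ∧
      l₁.Chain' (· < ·) ∧ l₂.Chain' (· > ·) ∧
      ∀ a ∈ l₁.getLast?, ∀ b ∈ l₂.head?, b ≤ a) :
    l.length ≤ 2 * Nat.log 2 n + 2 := by
  obtain ⟨l₁, l₂, rfl, h₁, h₂, -⟩ := hbitonic
  have run_length_le {m : List ℕ} (hm : m ⊆ l₁ ++ l₂) (hnd : m.Nodup) :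
      m.length ≤ Nat.log 2 n + 1 :=
    List.length_le_log_add_one_of_nodup_of_pow one_lt_two hnd (fun x hx => hpow x (hm hx))
      (fun x hx => hsum ▸ List.le_sum_of_mem (hm hx))
  have hlen₁ :=
    run_length_le (List.subset_append_left _ _) (List.isChain_iff_pairwise.1 h₁).nodup
  have hlen₂ :=
    run_length_le (List.subset_append_right _ _) (List.isChain_iff_pairwise.1 h₂).nodup
  rw [List.length_append]
  omega
end

section
/- Let G be a connected graph with distinct edge weights, T=mst(G), and root T at r. Obtain G' from G by replacing every non-tree edge (u,v) for which neither endpoint is an ancestor of the other with the two edges (u, lca(u,v)) and (v, lca(u,v)), each with weight w(u,v) (keeping only the lightest among resulting parallel edges). Then for every tree edge e∈T: min{w(f) : f is a non-tree edge of G whose tree path C(f) contains e} = min{w'(f') : f' is a non-tree edge of G' whose tree path contains e} (with min∅=∞). -/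
open SimpleGraph

/-- In the tree `fromEdgeSet ↑T` rooted at `r`, `a` is an ancestor of `b`:
`a` lies on the (unique) tree path from `r` to `b`. -/
def Anc {V : Type*} (T : Finset (Sym2 V)) (r a b : V) : Prop :=
  ∀ p : (SimpleGraph.fromEdgeSet (↑T : Set (Sym2 V))).Walk r b, p.IsPath → a ∈ p.support

/-- `ℓ` is the least common ancestor of `u` and `v` in the tree `fromEdgeSet ↑T`
rooted at `r`. -/
def IsLCA {V : Type*} (T : Finset (Sym2 V)) (r u v ℓ : V) : Prop :=
  Anc T r ℓ u ∧ Anc T r ℓ v ∧ ∀ c : V, Anc T r c u → Anc T r c v → Anc T r c ℓ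

/-- The weighted non-tree edges of the transformed graph `G'`: a non-tree edge
`s(u,v)` with one endpoint an ancestor of the other is kept with its weight, while a
non-tree edge `s(u,v)` with `ℓ = lca(u,v) ∉ {u,v}` is replaced by the two edges
`s(u,ℓ)` and `s(v,ℓ)`, each carrying the weight `w s(u,v)`. -/
def NewEdges {V : Type*} (G : SimpleGraph V) (w : Sym2 V → ℝ) (T : Finset (Sym2 V))
    (r : V) : Set (Sym2 V × ℝ) :=
  {p | ∃ u v : V, s(u, v) ∈ G.edgeSet ∧ s(u, v) ∉ T ∧
        (Anc T r u v ∨ Anc T r v u) ∧ p = (s(u, v), w s(u, v))} ∪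
  {p | ∃ u v ℓ : V, s(u, v) ∈ G.edgeSet ∧ s(u, v) ∉ T ∧
        ¬ Anc T r u v ∧ ¬ Anc T r v u ∧ IsLCA T r u v ℓ ∧
        (p = (s(u, ℓ), w s(u, v)) ∨ p = (s(v, ℓ), w s(u, v)))}

/-!
Cutting the tree path of a non-tree edge `(u, v)` at `ℓ = lca(u, v)` splits it into the tree
paths from `u` to `ℓ` and from `ℓ` to `v`. Hence a tree edge is covered by `(u, v)` exactly when
it is covered by one of the two replacement edges, which carry the same weight, so every tree
edge sees the same set of covering weights before and after the transformation.
-/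

namespace SimpleGraph

variable {V : Type*} {G : SimpleGraph V}

lemma IsAcyclic.eq_of_isPath (hG : G.IsAcyclic) {u v : V} {p q : G.Walk u v}
    (hp : p.IsPath) (hq : q.IsPath) : p = q :=
  congrArg Subtype.val ((hG.subsingleton_path u v).elim ⟨p, hp⟩ ⟨q, hq⟩)

namespace Walk

lemma IsPath.append {u v w : V} {p : G.Walk u v} {q : G.Walk v w} (hp : p.IsPath)
    (hq : q.IsPath) (hpq : ∀ x ∈ p.support, x ∈ q.support → x = v) : (p.append q).IsPath := by
  rw [isPath_def, support_append, List.nodup_append]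
  refine ⟨hp.support_nodup, hq.support_nodup.sublist q.support.tail_sublist, ?_⟩
  rintro x hx _ hy rfl
  obtain rfl := hpq x hx (List.mem_of_mem_tail hy)
  have hnodup := hq.support_nodup
  rw [← cons_tail_support] at hnodup
  exact (List.nodup_cons.mp hnodup).1 hy

lemma exists_eq_append_of_exists_mem_support (P : V → Prop) {u v : V} (p : G.Walk u v)
    (h : ∃ c ∈ p.support, P c) :
    ∃ (ℓ : V) (p₁ : G.Walk u ℓ) (p₂ : G.Walk ℓ v),
      p = p₁.append p₂ ∧ P ℓ ∧ ∀ c ∈ p₁.support, P c → c = ℓ := by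
  induction p with
  | nil =>
    obtain ⟨c, hc, hPc⟩ := h
    rw [support_nil, List.mem_singleton] at hc
    subst hc
    exact ⟨c, nil, nil, rfl, hPc, by simp⟩
  | @cons u x v hadj q ih =>
    by_cases hu : P u
    · exact ⟨u, nil, cons hadj q, rfl, hu, by simp⟩
    have hq : ∃ c ∈ q.support, P c := by
      obtain ⟨c, hc, hPc⟩ := h
      rcases List.mem_cons.mp (support_cons hadj q ▸ hc) with rfl | hc
      exacts [absurd hPc hu, ⟨c, hc, hPc⟩]
    obtain ⟨ℓ, q₁, q₂, rfl, hℓ, hfirst⟩ := ih hq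
    refine ⟨ℓ, cons hadj q₁, q₂, rfl, hℓ, fun c hc hPc => ?_⟩
    rcases List.mem_cons.mp (support_cons hadj q₁ ▸ hc) with rfl | hc
    exacts [absurd hPc hu, hfirst c hc hPc]

end Walk

end SimpleGraph

open SimpleGraph.Walk

section RootedTree

variable {V : Type*} {T : Finset (Sym2 V)}

lemma anc_iff_mem_support (hT : (fromEdgeSet (T : Set (Sym2 V))).IsTree) {r a b : V}
    {p : (fromEdgeSet (T : Set (Sym2 V))).Walk r b} (hp : p.IsPath) :
    Anc T r a b ↔ a ∈ p.support :=
  ⟨fun h => h p hp, fun ha _ hq => hT.isAcyclic.eq_of_isPath hp hq ▸ ha⟩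

lemma anc_antisymm (hT : (fromEdgeSet (T : Set (Sym2 V))).IsTree) {r a b : V}
    (hab : Anc T r a b) (hba : Anc T r b a) : a = b := by
  obtain ⟨p, hp⟩ := hT.connected.preconnected.exists_isPath r b
  obtain ⟨p₁, p₂, hp₁, -, rfl⟩ := hp.mem_support_iff_exists_append.mp (hab p hp)
  by_contra hne
  exact hp.ne_of_mem_support_of_append (Ne.symm hne) ((anc_iff_mem_support hT hp₁).mp hba)
    p₂.end_mem_support rfl

lemma IsLCA.unique (hT : (fromEdgeSet (T : Set (Sym2 V))).IsTree) {r u v ℓ ℓ' : V}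
    (h : IsLCA T r u v ℓ) (h' : IsLCA T r u v ℓ') : ℓ = ℓ' :=
  anc_antisymm hT (h'.2.2 ℓ h.1 h.2.1) (h.2.2 ℓ' h'.1 h'.2.1)

/-- `ℓ` is the first vertex of the path from `u` to `r` that lies on the path from `r` to `v`. -/
lemma exists_isLCA_isPath_append (hT : (fromEdgeSet (T : Set (Sym2 V))).IsTree) (r u v : V) :
    ∃ (ℓ : V) (pu : (fromEdgeSet (T : Set (Sym2 V))).Walk u ℓ)
      (pv : (fromEdgeSet (T : Set (Sym2 V))).Walk ℓ v),
      (pu.append pv).IsPath ∧ IsLCA T r u v ℓ := by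
  obtain ⟨p, hp⟩ := hT.connected.preconnected.exists_isPath u r
  obtain ⟨q, hq⟩ := hT.connected.preconnected.exists_isPath r v
  obtain ⟨ℓ, pu, p₂, rfl, hℓq, hfirst⟩ := p.exists_eq_append_of_exists_mem_support
    (· ∈ q.support) ⟨r, p.end_mem_support, q.start_mem_support⟩
  obtain ⟨q₁, pv, hq₁, hpv, rfl⟩ := hq.mem_support_iff_exists_append.mp hℓq
  have hpath : (pu.append pv).IsPath := hp.of_append_left.append hpv fun x hx hxv =>
    hfirst x hx (support_subset_support_append_right q₁ pv hxv)
  have hup : ∀ c, Anc T r c u ↔ c ∈ pu.support ∨ c ∈ p₂.support := fun c => by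
    rw [anc_iff_mem_support hT hp.reverse, support_reverse, List.mem_reverse,
      mem_support_append_iff]
  have hvq : ∀ c, Anc T r c v ↔ c ∈ q₁.support ∨ c ∈ pv.support := fun c => by
    rw [anc_iff_mem_support hT hq, mem_support_append_iff]
  refine ⟨ℓ, pu, pv, hpath, (hup ℓ).2 (Or.inl pu.end_mem_support),
    (hvq ℓ).2 (Or.inr pv.start_mem_support), fun c hcu hcv => ?_⟩
  rw [anc_iff_mem_support hT hq₁]
  rcases (hup c).1 hcu with hc | hc
  · obtain rfl := hfirst c hc ((mem_support_append_iff q₁ pv).2 ((hvq c).1 hcv))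
    exact q₁.end_mem_support
  · rw [← hT.isAcyclic.eq_of_isPath hp.of_append_right.reverse hq₁, support_reverse]
    exact List.mem_reverse.2 hc

lemma exists_isLCA (hT : (fromEdgeSet (T : Set (Sym2 V))).IsTree) (r u v : V) :
    ∃ ℓ, IsLCA T r u v ℓ :=
  let ⟨ℓ, _, _, _, hℓ⟩ := exists_isLCA_isPath_append hT r u v
  ⟨ℓ, hℓ⟩

lemma onTreePath_iff_mem_edges (hT : (fromEdgeSet (T : Set (Sym2 V))).IsTree) {e : Sym2 V}
    {a b : V} {p : (fromEdgeSet (T : Set (Sym2 V))).Walk a b} (hp : p.IsPath) :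
    OnTreePath T e s(a, b) ↔ e ∈ p.edges := by
  refine ⟨fun ⟨x, y, q, hq, hxy, he⟩ => ?_, fun he => ⟨a, b, p, hp, rfl, he⟩⟩
  rcases Sym2.eq_iff.mp hxy with ⟨rfl, rfl⟩ | ⟨rfl, rfl⟩
  · rwa [hT.isAcyclic.eq_of_isPath hp hq]
  · rwa [hT.isAcyclic.eq_of_isPath hp hq.reverse, edges_reverse, List.mem_reverse]

lemma onTreePath_iff_of_isLCA (hT : (fromEdgeSet (T : Set (Sym2 V))).IsTree) {e : Sym2 V}
    {r u v ℓ : V} (hℓ : IsLCA T r u v ℓ) :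
    OnTreePath T e s(u, v) ↔ OnTreePath T e s(u, ℓ) ∨ OnTreePath T e s(v, ℓ) := by
  obtain ⟨ℓ', pu, pv, hpath, hℓ'⟩ := exists_isLCA_isPath_append hT r u v
  obtain rfl := hℓ.unique hT hℓ'
  rw [onTreePath_iff_mem_edges hT hpath, onTreePath_iff_mem_edges hT hpath.of_append_left,
    onTreePath_iff_mem_edges hT hpath.of_append_right.reverse, edges_append, edges_reverse,
    List.mem_append, List.mem_reverse]

lemma image_snd_newEdges_onTreePath (hT : (fromEdgeSet (T : Set (Sym2 V))).IsTree)
    (G : SimpleGraph V) (w : Sym2 V → ℝ) (r : V) (e : Sym2 V) :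
    Prod.snd '' {p | p ∈ NewEdges G w T r ∧ OnTreePath T e p.1} =
      w '' {f | f ∈ G.edgeSet ∧ f ∉ T ∧ OnTreePath T e f} := by
  ext x
  constructor
  · rintro ⟨_, ⟨⟨u, v, hG, huvT, -, rfl⟩ | ⟨u, v, ℓ, hG, huvT, -, -, hℓ, rfl | rfl⟩, he⟩, rfl⟩
    · exact ⟨s(u, v), ⟨hG, huvT, he⟩, rfl⟩
    · exact ⟨s(u, v), ⟨hG, huvT, (onTreePath_iff_of_isLCA hT hℓ).2 (Or.inl he)⟩, rfl⟩
    · exact ⟨s(u, v), ⟨hG, huvT, (onTreePath_iff_of_isLCA hT hℓ).2 (Or.inr he)⟩, rfl⟩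
  · rintro ⟨f, ⟨hG, hfT, he⟩, rfl⟩
    induction f using Sym2.ind with | _ u v => ?_
    by_cases hanc : Anc T r u v ∨ Anc T r v u
    · exact ⟨(s(u, v), w s(u, v)), ⟨Or.inl ⟨u, v, hG, hfT, hanc, rfl⟩, he⟩, rfl⟩
    obtain ⟨hnuv, hnvu⟩ := not_or.mp hanc
    obtain ⟨ℓ, hℓ⟩ := exists_isLCA hT r u v
    rcases (onTreePath_iff_of_isLCA hT hℓ).1 he with heu | hev
    · exact ⟨(s(u, ℓ), w s(u, v)),
        ⟨Or.inr ⟨u, v, ℓ, hG, hfT, hnuv, hnvu, hℓ, Or.inl rfl⟩, heu⟩, rfl⟩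
    · exact ⟨(s(v, ℓ), w s(u, v)),
        ⟨Or.inr ⟨u, v, ℓ, hG, hfT, hnuv, hnvu, hℓ, Or.inr rfl⟩, hev⟩, rfl⟩

end RootedTree

theorem lca_transform_preserves_sensitivity_general {V : Type*}
    (G : SimpleGraph V)
    (w : Sym2 V → ℝ)
    (T : Finset (Sym2 V)) (hT : IsMST G w T) (r : V)
    (e : Sym2 V) :
    sInf ((fun f => ((w f : ℝ) : EReal)) ''
        {f : Sym2 V | f ∈ G.edgeSet ∧ f ∉ T ∧ OnTreePath T e f}) =
    sInf ((fun p => ((p.2 : ℝ) : EReal)) ''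
        {p : Sym2 V × ℝ | p ∈ NewEdges G w T r ∧ OnTreePath T e p.1}) := by
  have hweights := congrArg (fun s : Set ℝ => sInf (((↑) : ℝ → EReal) '' s))
    (image_snd_newEdges_onTreePath hT.1.2 G w r e)
  simpa only [Set.image_image] using hweights.symm

/-- The lca transformation preserves tree-edge sensitivities: for every tree edge
`e ∈ T`, the minimum weight of a non-tree edge of `G` whose tree path contains `e`
equals the minimum weight of a non-tree edge of the transformed graph `G'` whose tree
path contains `e` (minima taken in `EReal`, so `min ∅ = ∞`). -/
theorem lca_transform_preserves_sensitivity {V : Type*} [Fintype V] [DecidableEq V]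
    (G : SimpleGraph V) (hG : G.Connected)
    (w : Sym2 V → ℝ) (hw : Set.InjOn w G.edgeSet)
    (T : Finset (Sym2 V)) (hT : IsMST G w T) (r : V)
    (e : Sym2 V) (he : e ∈ T) :
    sInf ((fun f => ((w f : ℝ) : EReal)) ''
        {f : Sym2 V | f ∈ G.edgeSet ∧ f ∉ T ∧ OnTreePath T e f}) =
    sInf ((fun p => ((p.2 : ℝ) : EReal)) ''
        {p : Sym2 V × ℝ | p ∈ NewEdges G w T r ∧ OnTreePath T e p.1}) :=
  lca_transform_preserves_sensitivity_general G w T hT r e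
end
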